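/- For all x > 0, ∫_0^x z² ν(z) dz ≤ (1/π) min(x, 2), where ν(z) = K_1(z)/(π z). -/

import Mathlib

/-!
Substituting `s = sinh t` in `K₁(z) = ∫₀^∞ e^{-z cosh t} cosh t dt` shows that the
exponentially scaled Bessel function is `J(z) = e^z K₁(z) = ∫₀^∞ e^{-z(√(1+s²)-1)} ds`.
Since `√(1+s²) - 1` is nonnegative and at least `s - 1`, the integrand of `J` is at most `1`
on `(0, 1]` and at most `e^{-z(s-1)}` on `(1, ∞)`, so `J(z) ≤ 1 + 1/z`. Hence
`z² ν(z) = z e^{-z} J(z) / π ≤ (1 + z) e^{-z} / π`, and `∫₀^x (1 + z) e^{-z} dz = 2 - (2 + x) e^{-x}`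
is at most both `2` and `x` (the integrand is at most `1` because `1 + z ≤ e^z`).
-/

open MeasureTheory Real Set

noncomputable def scaledK1 (z : ℝ) : ℝ :=
  ∫ s in Ioi (0 : ℝ), exp (-z * (√(1 + s ^ 2) - 1))

lemma le_sqrt_one_add_sq (s : ℝ) : s ≤ √(1 + s ^ 2) :=
  (le_abs_self s).trans (abs_le_sqrt (by linarith))

section ScaledK1

variable {z : ℝ}

lemma exp_neg_mul_sqrt_one_add_sq_sub_one_le_one (hz : 0 ≤ z) (s : ℝ) :
    exp (-z * (√(1 + s ^ 2) - 1)) ≤ 1 := by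
  have : 1 ≤ √(1 + s ^ 2) := one_le_sqrt.mpr (by nlinarith)
  exact exp_le_one_iff.mpr (by nlinarith)

lemma exp_neg_mul_sqrt_one_add_sq_sub_one_le_exp (hz : 0 ≤ z) (s : ℝ) :
    exp (-z * (√(1 + s ^ 2) - 1)) ≤ exp z * exp (-z * s) := by
  rw [← exp_add]
  exact exp_le_exp.mpr (by nlinarith [le_sqrt_one_add_sq s])

lemma integrableOn_exp_mul_Ioi_const_mul (hz : 0 < z) (c : ℝ) :
    IntegrableOn (fun s => exp z * exp (-z * s)) (Ioi c) :=
  (integrableOn_exp_mul_Ioi (neg_lt_zero.mpr hz) c).const_mul _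

lemma integrableOn_exp_neg_mul_sqrt_one_add_sq_sub_one (hz : 0 < z) :
    IntegrableOn (fun s => exp (-z * (√(1 + s ^ 2) - 1))) (Ioi 0) := by
  refine (integrableOn_exp_mul_Ioi_const_mul hz 0).mono'
    (Continuous.aestronglyMeasurable (by fun_prop)) (Filter.Eventually.of_forall fun s => ?_)
  rw [norm_of_nonneg (exp_pos _).le]
  exact exp_neg_mul_sqrt_one_add_sq_sub_one_le_exp hz.le s

lemma scaledK1_nonneg (z : ℝ) : 0 ≤ scaledK1 z :=
  setIntegral_nonneg measurableSet_Ioi fun _ _ => (exp_pos _).le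

lemma scaledK1_le (hz : 0 < z) : scaledK1 z ≤ 1 + z⁻¹ := by
  have hint := integrableOn_exp_neg_mul_sqrt_one_add_sq_sub_one hz
  have head : ∫ s in Ioc (0 : ℝ) 1, exp (-z * (√(1 + s ^ 2) - 1)) ≤ 1 := by
    calc ∫ s in Ioc (0 : ℝ) 1, exp (-z * (√(1 + s ^ 2) - 1))
        ≤ ∫ _ in Ioc (0 : ℝ) 1, (1 : ℝ) :=
          setIntegral_mono_on (hint.mono_set Ioc_subset_Ioi_self)
            (integrableOn_const measure_Ioc_lt_top.ne) measurableSet_Ioc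
            fun s _ => exp_neg_mul_sqrt_one_add_sq_sub_one_le_one hz.le s
      _ = 1 := by simp
  have tail : ∫ s in Ioi (1 : ℝ), exp (-z * (√(1 + s ^ 2) - 1)) ≤ z⁻¹ := by
    calc ∫ s in Ioi (1 : ℝ), exp (-z * (√(1 + s ^ 2) - 1))
        ≤ ∫ s in Ioi (1 : ℝ), exp z * exp (-z * s) :=
          setIntegral_mono_on (hint.mono_set (Ioi_subset_Ioi zero_le_one))
            (integrableOn_exp_mul_Ioi_const_mul hz 1) measurableSet_Ioi
            fun s _ => exp_neg_mul_sqrt_one_add_sq_sub_one_le_exp hz.le s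
      _ = z⁻¹ := by
        rw [integral_const_mul, integral_exp_mul_Ioi (neg_lt_zero.mpr hz), mul_one,
          neg_div_neg_eq, mul_div_assoc', ← exp_add, add_neg_cancel, exp_zero, one_div]
  rw [scaledK1, ← Ioc_union_Ioi_eq_Ioi zero_le_one,
    setIntegral_union (Ioc_disjoint_Ioi le_rfl) measurableSet_Ioi
      (hint.mono_set Ioc_subset_Ioi_self) (hint.mono_set (Ioi_subset_Ioi zero_le_one))]
  linarith

lemma sq_mul_exp_neg_mul_scaledK1_div_le (hz : 0 < z) :
    z ^ 2 * (exp (-z) * scaledK1 z / (π * z)) ≤ (1 + z) * exp (-z) / π := by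
  have hJ : z * scaledK1 z ≤ 1 + z := by
    calc z * scaledK1 z ≤ z * (1 + z⁻¹) := mul_le_mul_of_nonneg_left (scaledK1_le hz) hz.le
      _ = 1 + z := by field_simp; ring
  calc z ^ 2 * (exp (-z) * scaledK1 z / (π * z)) = z * scaledK1 z * exp (-z) / π := by
        field_simp
    _ ≤ (1 + z) * exp (-z) / π := by gcongr

end ScaledK1

lemma one_add_mul_exp_neg_le_one (z : ℝ) : (1 + z) * exp (-z) ≤ 1 := by
  calc (1 + z) * exp (-z) ≤ exp z * exp (-z) := by
        gcongr; linarith [add_one_le_exp z]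
    _ = 1 := by rw [← exp_add, add_neg_cancel, exp_zero]

lemma integral_one_add_mul_exp_neg (x : ℝ) :
    ∫ z in (0 : ℝ)..x, (1 + z) * exp (-z) = 2 - (2 + x) * exp (-x) := by
  have hderiv (z : ℝ) : HasDerivAt (fun t => -(2 + t) * exp (-t)) ((1 + z) * exp (-z)) z := by
    have hlin : HasDerivAt (fun t : ℝ => -(2 + t)) (-1) z := ((hasDerivAt_id z).const_add 2).neg
    have hexp : HasDerivAt (fun t => exp (-t)) (-exp (-z)) z := by
      simpa using (hasDerivAt_neg z).exp
    exact (hlin.mul hexp).congr_deriv (by ring)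
  rw [intervalIntegral.integral_eq_sub_of_hasDerivAt (fun z _ => hderiv z)
    ((by fun_prop : Continuous fun z : ℝ => (1 + z) * exp (-z)).intervalIntegrable 0 x)]
  norm_num
  ring

lemma integral_one_add_mul_exp_neg_le_min {x : ℝ} (hx : 0 ≤ x) :
    ∫ z in (0 : ℝ)..x, (1 + z) * exp (-z) ≤ min x 2 := by
  refine le_min ?_ ?_
  · calc ∫ z in (0 : ℝ)..x, (1 + z) * exp (-z) ≤ ∫ _ in (0 : ℝ)..x, (1 : ℝ) :=
          intervalIntegral.integral_mono_on hx
            ((by fun_prop : Continuous fun z : ℝ => (1 + z) * exp (-z)).intervalIntegrable 0 x)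
            intervalIntegrable_const fun z _ => one_add_mul_exp_neg_le_one z
      _ = x := by simp
  · rw [integral_one_add_mul_exp_neg]
    have : 0 ≤ (2 + x) * exp (-x) := by positivity
    linarith

/-- For all `x > 0`, `∫_0^x z² ν(z) dz ≤ (1/π) min(x, 2)`, where `ν(z) = K₁(z)/(π z)` and
`K₁` is the modified Bessel function of the second kind, given by the integral representation
`K₁(z) = e^{-z} ∫_0^∞ e^{-z(√(1+s²)-1)} ds` for `z > 0`. -/
theorem nu_small_bound (K₁ ν : ℝ → ℝ)
    (hK : ∀ z : ℝ, 0 < z →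
      K₁ z = Real.exp (-z) * ∫ s in Set.Ioi (0 : ℝ), Real.exp (-z * (Real.sqrt (1 + s ^ 2) - 1)))
    (hν : ∀ z : ℝ, 0 < z → ν z = K₁ z / (Real.pi * z))
    (x : ℝ) (hx : 0 < x) :
    ∫ z in Set.Ioo (0 : ℝ) x, z ^ 2 * ν z ≤ (1 / Real.pi) * min x 2 := by
  have hν' (z : ℝ) (hz : 0 < z) : ν z = exp (-z) * scaledK1 z / (π * z) := by
    rw [hν z hz, hK z hz, scaledK1]
  have hnonneg (z : ℝ) (hz : z ∈ Ioo 0 x) : 0 ≤ z ^ 2 * ν z := by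
    rw [hν' z hz.1]
    have := scaledK1_nonneg z
    have := hz.1
    positivity
  have hbound (z : ℝ) (hz : z ∈ Ioo 0 x) : z ^ 2 * ν z ≤ (1 + z) * exp (-z) / π := by
    rw [hν' z hz.1]
    exact sq_mul_exp_neg_mul_scaledK1_div_le hz.1
  calc ∫ z in Ioo 0 x, z ^ 2 * ν z ≤ ∫ z in Ioo 0 x, (1 + z) * exp (-z) / π :=
        setIntegral_mono_of_nonneg hnonneg hbound
          ((by fun_prop : Continuous fun z : ℝ => (1 + z) * exp (-z) / π).integrableOn_Icc.mono_set
            Ioo_subset_Icc_self)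
    _ = (∫ z in (0 : ℝ)..x, (1 + z) * exp (-z)) / π := by
        rw [← integral_Ioc_eq_integral_Ioo, ← intervalIntegral.integral_of_le hx.le,
          intervalIntegral.integral_div]
    _ ≤ min x 2 / π := by gcongr; exact integral_one_add_mul_exp_neg_le_min hx.le
    _ = 1 / π * min x 2 := by ring
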